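/- Let L_1 be the 5×5 real symmetric tridiagonal matrix with zero diagonal and superdiagonal entries (1, √(3/2), √(3/2), 1), and let L_2 := diag(0, −1, −1, −1, −1). For every nonzero integer k, the matrix −i k L_1 + L_2 ∈ ℂ^{5×5} has exactly one real eigenvalue λ_0(k), this eigenvalue satisfies −5/8 < λ_0(k) < 0, λ_0 is strictly decreasing with respect to |k| (i.e. λ_0(k') < λ_0(k) whenever |k'| > |k| ≥ 1), and λ_0(k) → −5/8 as |k| → ∞. -/

import Mathlib

open Matrix Filter

/-- The symmetric tridiagonal matrix `L₁` of the 5-velocity discrete BGK model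
(entries over `ℂ`, superdiagonal `(1, √(3/2), √(3/2), 1)`). -/
noncomputable def L1five : Matrix (Fin 5) (Fin 5) ℂ :=
  !![0, 1, 0, 0, 0;
     1, 0, (Real.sqrt (3/2) : ℂ), 0, 0;
     0, (Real.sqrt (3/2) : ℂ), 0, (Real.sqrt (3/2) : ℂ), 0;
     0, 0, (Real.sqrt (3/2) : ℂ), 0, 1;
     0, 0, 0, 1, 0]

/-- The collision matrix `L₂ = diag(0,-1,-1,-1,-1)` of the 5-velocity model. -/
noncomputable def L2five : Matrix (Fin 5) (Fin 5) ℂ :=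
  Matrix.diagonal ![0, -1, -1, -1, -1]

/-- The `k`-th Fourier-mode matrix `-i k L₁ + L₂` of the 5-velocity BGK model. -/
noncomputable def modeMatrix (k : ℤ) : Matrix (Fin 5) (Fin 5) ℂ :=
  (-(k : ℂ) * Complex.I) • L1five + L2five

/-!
For real `x`, `det (x - (-i k L₁ + L₂)) = dispersion (k²) x`. For `t ≥ 1` the derivative of
`dispersion t` is positive, and `dispersion t` changes sign on `(-5/8, 0)`, so it has exactly one
real zero, which lies there. If `dispersion t x = 0` and `t < t'`, then
`t * dispersion t' x = (t' - t) * ((4x + 5/2) t t' - x (x+1)⁴) > 0`, so the zero decreases in `t`;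
and since the `t²`-coefficient `4x + 5/2` is positive for `x > -5/8`, `dispersion t x > 0` for
large `t`, which pushes the zero below every `x > -5/8`.
-/

noncomputable def dispersion (t x : ℝ) : ℝ :=
  x * (x + 1) ^ 4 + t * (x + 1) ^ 2 * (5 * x + 1) + t ^ 2 * (4 * x + 5 / 2)

theorem det_symmTridiag_five {R : Type*} [CommRing R] (d₀ d₁ d₂ d₃ d₄ e₀ e₁ e₂ e₃ : R) :
    det !![d₀, e₀, 0, 0, 0; e₀, d₁, e₁, 0, 0; 0, e₁, d₂, e₂, 0; 0, 0, e₂, d₃, e₃; 0, 0, 0, e₃, d₄] =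
      d₀ * d₁ * d₂ * d₃ * d₄ - e₀ ^ 2 * d₂ * d₃ * d₄ - e₁ ^ 2 * d₀ * d₃ * d₄
        - e₂ ^ 2 * d₀ * d₁ * d₄ - e₃ ^ 2 * d₀ * d₁ * d₂
        + e₀ ^ 2 * e₂ ^ 2 * d₄ + e₀ ^ 2 * e₃ ^ 2 * d₂ + e₁ ^ 2 * e₃ ^ 2 * d₀ := by
  simp [det_succ_row_zero, Fin.sum_univ_succ, Fin.succAbove]
  ring

theorem algebraMap_sub_modeMatrix (k : ℤ) (z : ℂ) :
    algebraMap ℂ _ z - modeMatrix k =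
      !![z, k * Complex.I, 0, 0, 0;
        k * Complex.I, z + 1, k * Complex.I * √(3 / 2), 0, 0;
        0, k * Complex.I * √(3 / 2), z + 1, k * Complex.I * √(3 / 2), 0;
        0, 0, k * Complex.I * √(3 / 2), z + 1, k * Complex.I;
        0, 0, 0, k * Complex.I, z + 1] := by
  ext i j
  fin_cases i <;> fin_cases j <;> simp [modeMatrix, L1five, L2five, algebraMap_matrix_apply]

theorem det_algebraMap_sub_modeMatrix (k : ℤ) (z : ℂ) :
    det (algebraMap ℂ _ z - modeMatrix k) =
      z * (z + 1) ^ 4 + k ^ 2 * (z + 1) ^ 2 * (5 * z + 1) + k ^ 4 * (4 * z + 5 / 2) := by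
  have hsqrt : ((√(3 / 2) : ℝ) : ℂ) ^ 2 = 3 / 2 := by
    norm_cast; rw [Real.sq_sqrt (by norm_num)]; norm_num
  rw [algebraMap_sub_modeMatrix, det_symmTridiag_five, mul_pow _ (√(3 / 2) : ℂ), hsqrt, mul_pow,
    Complex.I_sq]
  ring

theorem ofReal_mem_spectrum_modeMatrix_iff (k : ℤ) (x : ℝ) :
    (x : ℂ) ∈ spectrum ℂ (modeMatrix k) ↔ dispersion ((k : ℝ) ^ 2) x = 0 := by
  rw [spectrum.mem_iff, isUnit_iff_isUnit_det, isUnit_iff_ne_zero, not_not,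
    det_algebraMap_sub_modeMatrix, ← Complex.ofReal_eq_zero, dispersion]
  push_cast
  ring_nf

theorem hasDerivAt_dispersion (t x : ℝ) :
    HasDerivAt (dispersion t)
      ((x + 1) ^ 3 * (5 * x + 1) + t * (x + 1) * (15 * x + 7) + 4 * t ^ 2) x := by
  have h₁ := (hasDerivAt_id' x).add_const 1
  have h := (((hasDerivAt_id' x).mul (h₁.pow 4)).add
    (((h₁.pow 2).mul (((hasDerivAt_id' x).const_mul 5).add_const 1)).const_mul t)).add
    ((((hasDerivAt_id' x).const_mul 4).add_const (5 / 2)).const_mul (t ^ 2))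
  refine (h.congr_deriv ?_).congr_of_eventuallyEq (.of_forall fun y => ?_)
  · simp only [Pi.pow_apply]; push_cast; ring
  · simp only [dispersion, Pi.add_apply, Pi.mul_apply, Pi.pow_apply]; ring

theorem dispersion_strictMono {t : ℝ} (ht : 1 ≤ t) : StrictMono (dispersion t) := by
  refine strictMono_of_deriv_pos fun x => ?_
  rw [(hasDerivAt_dispersion t x).deriv, show (x + 1) ^ 3 * (5 * x + 1) + t * (x + 1) * (15 * x + 7)
      + 4 * t ^ 2 = (5 * x ^ 4 + 16 * x ^ 3 + 33 * x ^ 2 + 30 * x + 12)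
      + (15 * x ^ 2 + 22 * x + 15) * (t - 1) + 4 * (t - 1) ^ 2 by ring]
  have h₀ : 0 < 5 * x ^ 4 + 16 * x ^ 3 + 33 * x ^ 2 + 30 * x + 12 := by
    nlinarith [sq_nonneg (x ^ 2 + 8 / 5 * x + 1), sq_nonneg (x + 35 / 51)]
  have h₁ : 0 ≤ 15 * x ^ 2 + 22 * x + 15 := by nlinarith [sq_nonneg (x + 11 / 15)]
  linarith [mul_nonneg h₁ (sub_nonneg.2 ht), sq_nonneg (t - 1)]

theorem exists_dispersion_eq_zero {t : ℝ} (ht : 1 ≤ t) :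
    ∃ x ∈ Set.Ioo (-5 / 8) 0, dispersion t x = 0 := by
  have hcont : ContinuousOn (dispersion t) (Set.Icc (-5 / 8) 0) := by
    unfold dispersion; fun_prop
  have hneg : dispersion t (-5 / 8) < 0 := by unfold dispersion; nlinarith
  have hpos : 0 < dispersion t 0 := by unfold dispersion; nlinarith
  exact intermediate_value_Ioo (by norm_num) hcont ⟨hneg, hpos⟩

-- `0` is a junk value for `t < 1`.
noncomputable def dispersionRoot (t : ℝ) : ℝ :=
  if ht : 1 ≤ t then (exists_dispersion_eq_zero ht).choose else 0

section dispersionRoot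

variable {t : ℝ} (ht : 1 ≤ t)
include ht

theorem dispersionRoot_mem_Ioo : dispersionRoot t ∈ Set.Ioo (-5 / 8) 0 := by
  rw [dispersionRoot, dif_pos ht]
  exact (exists_dispersion_eq_zero ht).choose_spec.1

theorem dispersion_dispersionRoot : dispersion t (dispersionRoot t) = 0 := by
  rw [dispersionRoot, dif_pos ht]
  exact (exists_dispersion_eq_zero ht).choose_spec.2

theorem dispersion_eq_zero_iff {x : ℝ} : dispersion t x = 0 ↔ x = dispersionRoot t := by
  rw [← dispersion_dispersionRoot ht]
  exact (dispersion_strictMono ht).injective.eq_iff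

theorem dispersionRoot_lt_iff {x : ℝ} : dispersionRoot t < x ↔ 0 < dispersion t x := by
  rw [← dispersion_dispersionRoot ht]
  exact (dispersion_strictMono ht).lt_iff_lt.symm

end dispersionRoot

theorem dispersion_pos_of_lt {t t' x : ℝ} (ht : 0 < t) (htt' : t < t')
    (hx : x ∈ Set.Ioo (-5 / 8) 0) (hzero : dispersion t x = 0) : 0 < dispersion t' x := by
  obtain ⟨hx₁, hx₂⟩ := hx
  have key : t * dispersion t' x = (t' - t) * ((4 * x + 5 / 2) * t * t' - x * (x + 1) ^ 4) := by
    unfold dispersion at hzero ⊢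
    linear_combination t' * hzero
  have hfactor : 0 < (4 * x + 5 / 2) * t * t' - x * (x + 1) ^ 4 := by
    have : 0 < (x + 1) ^ 4 := pow_pos (by linarith) 4
    have : 0 < (4 * x + 5 / 2) * t * t' := by
      have := mul_pos ht (ht.trans htt')
      nlinarith
    nlinarith
  have : 0 < t * dispersion t' x := key ▸ mul_pos (by linarith) hfactor
  exact pos_of_mul_pos_right this ht.le

theorem dispersionRoot_strictAntiOn : StrictAntiOn dispersionRoot (Set.Ici 1) := by
  intro t ht t' ht' htt'
  exact (dispersionRoot_lt_iff ht').2 <| dispersion_pos_of_lt (by linarith [Set.mem_Ici.1 ht])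
    htt' (dispersionRoot_mem_Ioo ht) (dispersion_dispersionRoot ht)

theorem eventually_dispersion_pos {x : ℝ} (hx : -5 / 8 < x) :
    ∀ᶠ t in atTop, 0 < dispersion t x := by
  have hlead : 0 < 4 * x + 5 / 2 := by linarith
  have hquad : Tendsto (fun t => t * ((4 * x + 5 / 2) * t + (x + 1) ^ 2 * (5 * x + 1))
      + x * (x + 1) ^ 4) atTop atTop :=
    (tendsto_id.atTop_mul_atTop₀ ((tendsto_id.const_mul_atTop hlead).atTop_add
      tendsto_const_nhds)).atTop_add tendsto_const_nhds
  filter_upwards [hquad.eventually_gt_atTop 0] with t ht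
  unfold dispersion
  linarith

theorem tendsto_dispersionRoot_atTop : Tendsto dispersionRoot atTop (nhds (-5 / 8)) := by
  refine tendsto_order.2 ⟨fun y hy => ?_, fun y hy => ?_⟩
  · filter_upwards [eventually_ge_atTop 1] with t ht
    exact hy.trans (dispersionRoot_mem_Ioo ht).1
  · filter_upwards [eventually_ge_atTop 1, eventually_dispersion_pos hy] with t ht hpos
    exact (dispersionRoot_lt_iff ht).2 hpos

theorem tendsto_intCast_sq_cofinite_atTop : Tendsto (fun k : ℤ => (k : ℝ) ^ 2) cofinite atTop := by
  have := (tendsto_pow_atTop two_ne_zero).comp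
    (tendsto_norm_cocompact_atTop.comp Int.tendsto_coe_cofinite)
  simpa [Function.comp_def, Real.norm_eq_abs, sq_abs] using this

theorem one_le_intCast_sq {k : ℤ} (hk : 1 ≤ |k|) : 1 ≤ (k : ℝ) ^ 2 :=
  (one_le_sq_iff_one_le_abs _).2 (by exact_mod_cast hk)

/-- for every `k ≠ 0`, the matrix `-i k L₁ + L₂` has exactly one real
eigenvalue `λ₀(k)`; it satisfies `-5/8 < λ₀(k) < 0`, is strictly decreasing in `|k|`,
and `λ₀(k) → -5/8` as `|k| → ∞`. -/
theorem stmt_14 :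
    ∃ lam0 : ℤ → ℝ,
      (∀ k : ℤ, k ≠ 0 →
        ((lam0 k : ℂ) ∈ spectrum ℂ (modeMatrix k) ∧
          ∀ r : ℝ, (r : ℂ) ∈ spectrum ℂ (modeMatrix k) → r = lam0 k)) ∧
      (∀ k : ℤ, k ≠ 0 → -5/8 < lam0 k ∧ lam0 k < 0) ∧
      (∀ k k' : ℤ, 1 ≤ |k| → |k| < |k'| → lam0 k' < lam0 k) ∧
      Tendsto (fun k : ℤ => lam0 k) cofinite (nhds (-5/8)) := by
  refine ⟨fun k => dispersionRoot ((k : ℝ) ^ 2), fun k hk => ?_, fun k hk => ?_,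
    fun k k' hk hkk' => ?_, tendsto_dispersionRoot_atTop.comp tendsto_intCast_sq_cofinite_atTop⟩
  · have ht := one_le_intCast_sq (Int.one_le_abs hk)
    exact ⟨(ofReal_mem_spectrum_modeMatrix_iff k _).2 (dispersion_dispersionRoot ht),
      fun r hr => (dispersion_eq_zero_iff ht).1 ((ofReal_mem_spectrum_modeMatrix_iff k r).1 hr)⟩
  · exact dispersionRoot_mem_Ioo (one_le_intCast_sq (Int.one_le_abs hk))
  · have ht := one_le_intCast_sq hk
    have htt' : (k : ℝ) ^ 2 < (k' : ℝ) ^ 2 := sq_lt_sq.2 (by exact_mod_cast hkk')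
    exact dispersionRoot_strictAntiOn ht (ht.trans htt'.le) htt'
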